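/- Let θ = ({X_t}, {h_t}) be a partial action of a group G on a set X. Then the relation on G × X defined by (r,x) ∼ (s,y) ⟺ x ∈ X_{r⁻¹s} and h_{s⁻¹r}(x) = y is an equivalence relation. -/
import Mathlib


/-- A partial action of a group `G` on a set `X`: `dom t` is the subset `X_t`, and
`h t` is a (total extension of the) bijection `h_t : X_{t⁻¹} → X_t`. -/
structure PartialAction (G : Type*) [Group G] (X : Type*) where
  dom : G → Set X
  h : G → X → X
  dom_one : dom 1 = Set.univ
  h_one : ∀ x, h 1 x = x
  bijOn : ∀ t, Set.BijOn (h t) (dom t⁻¹) (dom t)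
  image_inter : ∀ t s, h t '' (dom t⁻¹ ∩ dom s) = dom t ∩ dom (t * s)
  hcomp : ∀ t s x, x ∈ dom s⁻¹ ∩ dom (s⁻¹ * t⁻¹) → h t (h s x) = h (t * s) x

/-- The relation on `G × X` given by `(r,x) ∼ (s,y) ↔ x ∈ X_{r⁻¹s} ∧ h_{s⁻¹r}(x) = y`. -/
def PartialAction.rel {G X : Type*} [Group G] (θ : PartialAction G X) :
    G × X → G × X → Prop :=
  fun p q => p.2 ∈ θ.dom (p.1⁻¹ * q.1) ∧ θ.h (q.1⁻¹ * p.1) p.2 = q.2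

/-- The relation `(r,x) ∼ (s,y) ⟺ x ∈ X_{r⁻¹s}` and `h_{s⁻¹r}(x) = y` associated to a
partial action of a group `G` on a set `X` is an equivalence relation. -/
theorem rel_of_partialAction_isEquivalence {G X : Type*} [Group G]
    (θ : PartialAction G X) : Equivalence θ.rel := by
  have key : ∀ (r s : G) (x : X), x ∈ θ.dom (s⁻¹ * r)⁻¹ →
      θ.h (r⁻¹ * s) (θ.h (s⁻¹ * r) x) = x := by
    intro r s x hx'
    rw [θ.hcomp (r⁻¹ * s) (s⁻¹ * r) x ⟨hx', by
      rw [show (s⁻¹ * r)⁻¹ * (r⁻¹ * s)⁻¹ = 1 by group, θ.dom_one]; trivial⟩]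
    rw [show r⁻¹ * s * (s⁻¹ * r) = 1 by group, θ.h_one]
  constructor
  · rintro ⟨r, x⟩
    refine ⟨?_, ?_⟩ <;> simp [θ.dom_one, θ.h_one]
  · rintro ⟨r, x⟩ ⟨s, y⟩ ⟨hx, hy⟩
    dsimp only at hx hy ⊢
    have hx' : x ∈ θ.dom (s⁻¹ * r)⁻¹ := by simpa [mul_inv_rev] using hx
    have hyd : y ∈ θ.dom (s⁻¹ * r) := hy ▸ (θ.bijOn (s⁻¹ * r)).mapsTo hx'
    exact ⟨hyd, by rw [← hy, key r s x hx']⟩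
  · rintro ⟨r, x⟩ ⟨s, y⟩ ⟨t, z⟩ ⟨hx, hy⟩ ⟨hyd, hz⟩
    dsimp only at hx hy hyd hz ⊢
    have hx' : x ∈ θ.dom (s⁻¹ * r)⁻¹ := by simpa [mul_inv_rev] using hx
    have hxy : θ.h (r⁻¹ * s) y = x := by rw [← hy, key r s x hx']
    have hymem : y ∈ θ.dom (r⁻¹ * s)⁻¹ ∩ θ.dom (s⁻¹ * t) := by
      refine ⟨?_, hyd⟩
      rw [← hy]
      simpa [mul_inv_rev] using (θ.bijOn (s⁻¹ * r)).mapsTo hx'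
    have hxmem : x ∈ θ.dom (r⁻¹ * s) ∩ θ.dom ((r⁻¹ * s) * (s⁻¹ * t)) := by
      rw [← θ.image_inter (r⁻¹ * s) (s⁻¹ * t)]; exact ⟨y, hymem, hxy⟩
    have hxt : x ∈ θ.dom (r⁻¹ * t) := by
      have := hxmem.2; rwa [show r⁻¹ * s * (s⁻¹ * t) = r⁻¹ * t by group] at this
    refine ⟨hxt, ?_⟩
    rw [← hz, ← hy,
      θ.hcomp (t⁻¹ * s) (s⁻¹ * r) x ⟨hx', by simpa [mul_inv_rev, mul_assoc] using hxt⟩]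
    congr 1
    group
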